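/- Under the same setting (λ a complete characteristic map on wed_v(K) with {λ(v₁),λ(v₂)} unimodular), λ is non-singular if and only if both projections proj_{v₁}λ and proj_{v₂}λ are non-singular. -/

import Mathlib

/-!
Every face of `wed_v(K)` lies in a face containing `v₁` or `v₂`, and unimodularity passes to
subsets, so non-singularity only has to be checked on the stars of `v₁` and `v₂`. For a face
`τ ∋ u` on which `λ` is linearly independent, `λ(τ)` is part of a `ℤ`-basis iff the images of
`λ(τ ∖ u)` in `ℤⁿ⁺¹/⟨λ(u)⟩` are: a basis containing `λ(u)` descends to the quotient, and
conversely `λ(u)` together with lifts of a basis of the quotient, chosen inside `λ(τ ∖ u)`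
wherever possible, is a basis of `ℤⁿ⁺¹`.
-/

variable {V : Type*}

/-- An (abstract) simplicial complex on the vertex set `V`: a collection of finite
subsets of `V` closed under taking subsets. -/
def IsComplex (K : Set (Finset V)) : Prop :=
  ∀ σ ∈ K, ∀ τ ⊆ σ, τ ∈ K

/-- The link of a vertex `v` in `K`. -/
def linkOf [DecidableEq V] (K : Set (Finset V)) (v : V) : Set (Finset V) :=
  {σ | v ∉ σ ∧ insert v σ ∈ K}

/-- The deletion `K \ {v}`: the induced subcomplex on the vertices other than `v`. -/
def delOf (K : Set (Finset V)) (v : V) : Set (Finset V) :=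
  {σ | σ ∈ K ∧ v ∉ σ}

/-- The simplicial wedge `wed_v(K) = (I ⋆ link_K{v}) ∪ (∂I ⋆ (K \ {v}))` of `K` at the
vertex `v`.  Its vertex set is `V ⊕ Unit`, where `v₁ = Sum.inl v` and `v₂ = Sum.inr ()`
are the two vertices of the edge `I`. -/
def wedgeAt [DecidableEq V] (K : Set (Finset V)) (v : V) : Set (Finset (V ⊕ Unit)) :=
  {τ | ∃ (s : Finset (V ⊕ Unit)) (σ : Finset V),
    s ⊆ {Sum.inl v, Sum.inr ()} ∧ τ = s ∪ σ.image Sum.inl ∧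
    (σ ∈ linkOf K v ∨ (s ≠ {Sum.inl v, Sum.inr ()} ∧ σ ∈ delOf K v))}

/-- The geometric realization of a simplicial complex on a finite vertex set `V`,
realized inside `V → ℝ` as convex combinations supported on faces. -/
def realization [Fintype V] (K : Set (Finset V)) : Set (V → ℝ) :=
  {f | (∀ w, 0 ≤ f w) ∧ (∑ w, f w) = 1 ∧ ∃ σ ∈ K, ∀ w, w ∉ σ → f w = 0}

/-- A subset `S` of `ℝⁿ` is star-shaped in `p` if every ray emanating from `p`
intersects `S` once and only once. -/
def StarShapedIn {n : ℕ} (S : Set (EuclideanSpace ℝ (Fin n)))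
    (p : EuclideanSpace ℝ (Fin n)) : Prop :=
  ∀ u : EuclideanSpace ℝ (Fin n), u ≠ 0 → ∃! t : ℝ, 0 ≤ t ∧ p + t • u ∈ S

/-- `K` is a fan-like simplicial sphere of dimension `n − 1`: its geometric realization
embeds into `ℝⁿ` as a star-shaped set (equivalently, there is a complete fan over `K`). -/
def FanLike [Fintype V] (K : Set (Finset V)) (n : ℕ) : Prop :=
  ∃ (S : Set (EuclideanSpace ℝ (Fin n))) (p : EuclideanSpace ℝ (Fin n)),
    Nonempty (realization K ≃ₜ S) ∧ StarShapedIn S p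

/-- A subset of a `ℤ`-module is unimodular if it is part of a `ℤ`-basis. -/
def IsUnimodularSet {M : Type*} [AddCommGroup M] [Module ℤ M] (s : Set M) : Prop :=
  ∃ (ι : Type) (b : Module.Basis ι ℤ M), s ⊆ Set.range b

/-- `(K, lam)` is a characteristic map over `ℤ`: the vectors assigned to the vertices of
each face of `K` are linearly independent over `ℝ`. -/
def IsCharMapInt {W : Type*} {N : ℕ} (K : Set (Finset W)) (lam : W → (Fin N → ℤ)) :
    Prop :=
  ∀ σ ∈ K, LinearIndependent ℝ (fun w : σ => fun j => ((lam w.1 j : ℝ)))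

/-- `(K, lam)` is non-singular: for every face of `K` the assigned vectors positively
span a non-singular cone, i.e. they form a unimodular set. -/
def NonSingularInt {W : Type*} {N : ℕ} (K : Set (Finset W)) (lam : W → (Fin N → ℤ)) :
    Prop :=
  ∀ σ ∈ K, IsUnimodularSet (lam '' ↑σ)

open Submodule Set

section Lattice

variable {R M : Type*} [Ring R] [AddCommGroup M] [Module R M]

lemma Module.Basis.exists_basis_quotient_span_singleton {ι : Type*} (b : Module.Basis ι R M)
    (i₀ : ι) :
    ∃ c : Module.Basis {i // i ≠ i₀} R (M ⧸ R ∙ b i₀), ∀ i, c i = (R ∙ b i₀).mkQ (b i) := by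
  have hli : LinearIndependent R fun i : {i // i ≠ i₀} => (R ∙ b i₀).mkQ (b i) := by
    have h := ((linearIndepOn_union_iff_quotient (f := b) (s := {i₀}) (t := {i₀}ᶜ)
      disjoint_compl_right).mp (by simpa using b.linearIndependent.linearIndepOn univ)).2
    rwa [image_singleton] at h
  have hsp : ⊤ ≤ span R (range fun i : {i // i ≠ i₀} => (R ∙ b i₀).mkQ (b i)) := by
    have htop : span R (range ((R ∙ b i₀).mkQ ∘ b)) = ⊤ := by
      rw [range_comp, ← map_span, b.span_eq, Submodule.map_top, range_mkQ]
    refine htop.symm.le.trans (span_le.mpr ?_)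
    rintro _ ⟨i, rfl⟩
    by_cases hi : i = i₀
    · subst hi
      simp [(Submodule.Quotient.mk_eq_zero _).mpr (mem_span_singleton_self _)]
    · exact subset_span ⟨⟨i, hi⟩, rfl⟩
  exact ⟨.mk hli hsp, fun i => Module.Basis.mk_apply hli hsp i⟩

lemma LinearIndepOn.injOn_mkQ_span_singleton [Nontrivial R] {x : M} {s : Set M}
    (h : LinearIndepOn R id (insert x s)) (hxs : x ∉ s) : InjOn (R ∙ x).mkQ s := by
  have h' := ((linearIndepOn_union_iff_quotient (f := id)
    (disjoint_singleton_left.mpr hxs)).mp (by rwa [singleton_union])).2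
  rw [image_id] at h'
  exact h'.injOn

lemma exists_basis_sumElim_of_quotient {W : Submodule R M} {m n : Type*} {f : m → M}
    (hf : LinearIndependent R f) (hfW : span R (range f) = W) (bQ : Module.Basis n R (M ⧸ W))
    {g : n → M} (hg : W.mkQ ∘ g = bQ) :
    ∃ B : Module.Basis (m ⊕ n) R M, ⇑B = Sum.elim f g := by
  subst hfW
  have hli : LinearIndependent R (Sum.elim f g) := by
    have h := (Module.Basis.span hf).linearIndependent.sumElim_of_quotient g
      (hg ▸ bQ.linearIndependent)
    simpa only [Module.Basis.span_apply] using h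
  have hsp : ⊤ ≤ span R (range (Sum.elim f g)) := by
    rw [Set.Sum.elim_range, span_union, top_le_iff, ← map_mkQ_eq_top, map_span, ← range_comp,
      hg, bQ.span_eq]
  exact ⟨.mk hli hsp, Module.Basis.coe_mk hli hsp⟩

end Lattice

-- Instance search equips quotients with `AddCommGroup.toIntModule`, not `Quotient.module`.
lemma isUnimodularSet_congr_module {M : Type*} [AddCommGroup M] (inst₁ inst₂ : Module ℤ M)
    (s : Set M) : @IsUnimodularSet M _ inst₁ s ↔ @IsUnimodularSet M _ inst₂ s := by
  rw [Subsingleton.elim inst₁ inst₂]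

section Unimodular

variable {M : Type*} [AddCommGroup M] [Module ℤ M]

lemma IsUnimodularSet.mono {s t : Set M} (h : IsUnimodularSet t) (hst : s ⊆ t) :
    IsUnimodularSet s :=
  let ⟨ι, b, hb⟩ := h
  ⟨ι, b, hst.trans hb⟩

lemma IsUnimodularSet.image_mkQ_of_insert {x : M} {s : Set M} (h : IsUnimodularSet (insert x s))
    (hxs : x ∉ s) : IsUnimodularSet ((ℤ ∙ x).mkQ '' s) := by
  obtain ⟨ι, b, hb⟩ := h
  obtain ⟨i₀, rfl⟩ := hb (mem_insert _ _)
  obtain ⟨c, hc⟩ := b.exists_basis_quotient_span_singleton i₀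
  rw [isUnimodularSet_congr_module _ (Submodule.Quotient.module _)]
  refine ⟨{i // i ≠ i₀}, c, ?_⟩
  rintro _ ⟨y, hy, rfl⟩
  obtain ⟨i, rfl⟩ := hb (mem_insert_of_mem _ hy)
  exact ⟨⟨i, fun h => hxs (h ▸ hy)⟩, hc _⟩

lemma IsUnimodularSet.insert_of_image_mkQ {x : M} {s : Set M}
    (hx : LinearIndependent ℤ fun _ : Unit => x) (hinj : InjOn (ℤ ∙ x).mkQ s)
    (h : IsUnimodularSet ((ℤ ∙ x).mkQ '' s)) : IsUnimodularSet (insert x s) := by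
  rw [isUnimodularSet_congr_module _ (Submodule.Quotient.module _)] at h
  obtain ⟨ι, c, hc⟩ := h
  have hlift : ∀ j, ∃ y, (ℤ ∙ x).mkQ y = c j ∧ (c j ∈ (ℤ ∙ x).mkQ '' s → y ∈ s) := by
    intro j
    by_cases hj : c j ∈ (ℤ ∙ x).mkQ '' s
    · obtain ⟨y, hy, hyj⟩ := hj
      exact ⟨y, hyj, fun _ => hy⟩
    · obtain ⟨y, hy⟩ := (ℤ ∙ x).mkQ_surjective (c j)
      exact ⟨y, hy, fun h => absurd h hj⟩
  choose g hgc hgs using hlift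
  obtain ⟨B, hB⟩ := exists_basis_sumElim_of_quotient hx (by rw [range_const]) c (funext hgc)
  refine ⟨Unit ⊕ ι, B, ?_⟩
  rintro y (rfl | hy)
  · exact ⟨.inl (), by rw [hB, Sum.elim_inl]⟩
  · obtain ⟨j, hj⟩ := hc (mem_image_of_mem _ hy)
    refine ⟨.inr j, ?_⟩
    rw [hB, Sum.elim_inr]
    exact hinj (hgs j (hj ▸ mem_image_of_mem _ hy)) hy (by rw [hgc, hj])

lemma isUnimodularSet_insert_iff_image_mkQ {x : M} {s : Set M}
    (hli : LinearIndepOn ℤ id (insert x s)) (hxs : x ∉ s) :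
    IsUnimodularSet (insert x s) ↔ IsUnimodularSet ((ℤ ∙ x).mkQ '' s) := by
  refine ⟨fun h => h.image_mkQ_of_insert hxs, fun h => h.insert_of_image_mkQ ?_ ?_⟩
  · exact (hli.mono (singleton_subset_iff.mpr (mem_insert _ _))).comp (fun _ => ⟨x, rfl⟩)
      (fun _ _ _ => rfl)
  · exact hli.injOn_mkQ_span_singleton hxs

variable {W : Type*} [DecidableEq W]

lemma isUnimodularSet_image_iff_erase {lam : W → M} {τ : Finset W} {u : W}
    (hli : LinearIndepOn ℤ lam ↑τ) (hu : u ∈ τ) :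
    IsUnimodularSet (lam '' ↑τ) ↔
      IsUnimodularSet ((fun w => (ℤ ∙ lam u).mkQ (lam w)) '' ↑(τ.erase u)) := by
  have hτ : lam '' ↑τ = insert (lam u) (lam '' ↑(τ.erase u)) := by
    rw [← image_insert_eq, ← Finset.coe_insert, Finset.insert_erase hu]
  have hxs : lam u ∉ lam '' ↑(τ.erase u) := by
    rintro ⟨w, hw, hwu⟩
    exact Finset.ne_of_mem_erase hw (hli.injOn (Finset.mem_of_mem_erase hw) hu hwu)
  rw [hτ, isUnimodularSet_insert_iff_image_mkQ (hτ ▸ hli.id_image) hxs, image_image]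

lemma forall_mem_isUnimodularSet_iff_link {K : Set (Finset W)} {lam : W → M}
    (hK : ∀ τ ∈ K, LinearIndepOn ℤ lam ↑τ) (u : W) :
    (∀ τ ∈ K, u ∈ τ → IsUnimodularSet (lam '' ↑τ)) ↔
      ∀ σ ∈ linkOf K u, IsUnimodularSet ((fun w => (ℤ ∙ lam u).mkQ (lam w)) '' ↑σ) := by
  constructor
  · rintro h σ ⟨huσ, hσ⟩
    have := (isUnimodularSet_image_iff_erase (hK _ hσ) (Finset.mem_insert_self u σ)).mp
      (h _ hσ (Finset.mem_insert_self u σ))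
    rwa [Finset.erase_insert huσ] at this
  · intro h τ hτ hu
    refine (isUnimodularSet_image_iff_erase (hK τ hτ) hu).mpr (h _ ⟨Finset.notMem_erase u τ, ?_⟩)
    rwa [Finset.insert_erase hu]

end Unimodular

lemma IsCharMapInt.linearIndepOn {W : Type*} {N : ℕ} {K : Set (Finset W)}
    {lam : W → Fin N → ℤ} (h : IsCharMapInt K lam) {σ : Finset W} (hσ : σ ∈ K) :
    LinearIndepOn ℤ lam ↑σ :=
  LinearIndependent.of_comp ((Int.castAddHom ℝ).toIntLinearMap.compLeft (Fin N))
    ((h σ hσ).restrict_scalars' ℤ)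

lemma nonSingularInt_iff_of_forall_exists_superset {W : Type*} {N : ℕ} {K : Set (Finset W)}
    {lam : W → Fin N → ℤ} {u₁ u₂ : W} (hK : ∀ τ ∈ K, ∃ τ' ∈ K, τ ⊆ τ' ∧ (u₁ ∈ τ' ∨ u₂ ∈ τ')) :
    NonSingularInt K lam ↔ (∀ τ ∈ K, u₁ ∈ τ → IsUnimodularSet (lam '' ↑τ)) ∧
      (∀ τ ∈ K, u₂ ∈ τ → IsUnimodularSet (lam '' ↑τ)) := by
  refine ⟨fun h => ⟨fun τ hτ _ => h τ hτ, fun τ hτ _ => h τ hτ⟩, fun ⟨h₁, h₂⟩ τ hτ => ?_⟩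
  obtain ⟨τ', hτ', hττ', hu | hu⟩ := hK τ hτ
  · exact (h₁ τ' hτ' hu).mono (image_mono (Finset.coe_subset.mpr hττ'))
  · exact (h₂ τ' hτ' hu).mono (image_mono (Finset.coe_subset.mpr hττ'))

section Wedge

variable [DecidableEq V] {K : Set (Finset V)} {v : V}

lemma insert_inl_mem_wedgeAt {τ : Finset (V ⊕ Unit)} (hτ : τ ∈ wedgeAt K v)
    (h₁ : Sum.inl v ∉ τ) (h₂ : Sum.inr () ∉ τ) : insert (Sum.inl v) τ ∈ wedgeAt K v := by
  obtain ⟨s, σ, hs, rfl, hσ⟩ := hτ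
  obtain rfl : s = ∅ := by
    refine Finset.eq_empty_of_forall_notMem fun a ha => ?_
    rcases Finset.mem_insert.mp (hs ha) with rfl | ha'
    · exact h₁ (Finset.mem_union_left _ ha)
    · exact h₂ (Finset.mem_singleton.mp ha' ▸ Finset.mem_union_left _ ha)
  have hne : ({Sum.inl v} : Finset (V ⊕ Unit)) ≠ {Sum.inl v, Sum.inr ()} := fun h => by
    simpa using congrArg (Sum.inr () ∈ ·) h
  exact ⟨{Sum.inl v}, σ, by simp, by rw [Finset.empty_union, Finset.insert_eq],
    hσ.imp_right fun h => ⟨hne, h.2⟩⟩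

lemma exists_superset_mem_wedgeAt (τ : Finset (V ⊕ Unit)) (hτ : τ ∈ wedgeAt K v) :
    ∃ τ' ∈ wedgeAt K v, τ ⊆ τ' ∧ (Sum.inl v ∈ τ' ∨ Sum.inr () ∈ τ') := by
  by_cases h : Sum.inl v ∈ τ ∨ Sum.inr () ∈ τ
  · exact ⟨τ, hτ, subset_rfl, h⟩
  push Not at h
  exact ⟨_, insert_inl_mem_wedgeAt hτ h.1 h.2, Finset.subset_insert _ _,
    .inl (Finset.mem_insert_self _ _)⟩

end Wedge

theorem charMap_wedge_nonsingular_iff_projections_general [DecidableEq V] (n : ℕ)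
    (K : Set (Finset V)) (v : V)
    (lam : (V ⊕ Unit) → (Fin (n + 1) → ℤ))
    (hchar : IsCharMapInt (wedgeAt K v) lam) :
    NonSingularInt (wedgeAt K v) lam ↔
      ((∀ σ ∈ linkOf (wedgeAt K v) (Sum.inl v),
          IsUnimodularSet
            ((fun w => (Submodule.span ℤ {lam (Sum.inl v)}).mkQ (lam w)) '' ↑σ)) ∧
       (∀ σ ∈ linkOf (wedgeAt K v) (Sum.inr ()),
          IsUnimodularSet
            ((fun w => (Submodule.span ℤ {lam (Sum.inr ())}).mkQ (lam w)) '' ↑σ))) := by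
  have hli := fun τ (hτ : τ ∈ wedgeAt K v) => hchar.linearIndepOn hτ
  rw [nonSingularInt_iff_of_forall_exists_superset exists_superset_mem_wedgeAt,
    forall_mem_isUnimodularSet_iff_link hli, forall_mem_isUnimodularSet_iff_link hli]

/-- Let `lam` be a complete characteristic map on `wed_v(K)` (with `K` a fan-like
simplicial sphere and `{lam v₁, lam v₂}` unimodular).  Then `lam` is non-singular if and
only if both projections `proj_{v₁} lam` and `proj_{v₂} lam` — the induced maps on
`link {v₁}` and `link {v₂}` with values in the quotient lattices `ℤ^{n+1}/⟨lam vⱼ⟩` —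
are non-singular. -/
theorem charMap_wedge_nonsingular_iff_projections [Fintype V] [DecidableEq V] (n : ℕ)
    (K : Set (Finset V)) (hK : IsComplex K) (v : V) (hv : ({v} : Finset V) ∈ K)
    (hfan : FanLike K n)
    (lam : (V ⊕ Unit) → (Fin (n + 1) → ℤ))
    (hchar : IsCharMapInt (wedgeAt K v) lam)
    (huni : IsUnimodularSet {lam (Sum.inl v), lam (Sum.inr ())}) :
    NonSingularInt (wedgeAt K v) lam ↔
      ((∀ σ ∈ linkOf (wedgeAt K v) (Sum.inl v),
          IsUnimodularSet
            ((fun w => (Submodule.span ℤ {lam (Sum.inl v)}).mkQ (lam w)) '' ↑σ)) ∧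
       (∀ σ ∈ linkOf (wedgeAt K v) (Sum.inr ()),
          IsUnimodularSet
            ((fun w => (Submodule.span ℤ {lam (Sum.inr ())}).mkQ (lam w)) '' ↑σ))) :=
  charMap_wedge_nonsingular_iff_projections_general n K v lam hchar
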